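/- arXiv:1909.04991 — 2 statements merged into one kernel-verified Lean document; each statement's English description precedes it below -/
import Mathlib

section
/- Let A be an m×n real matrix of rank m with m ≤ n, and let P be a symmetric positive definite (n+p)×(n+p) matrix partitioned as [[P_xx, P_xy],[P_xy^T, P_yy]]. Then the KKT matrix [[P_xx, P_xy, A^T],[P_xy^T, P_yy, 0],[A, 0, 0]] is nonsingular. -/
open Matrix

lemma aux_inj {m n : ℕ} (A : Matrix (Fin m) (Fin n) ℝ) (hA : A.rank = m) :
    Function.Injective Aᵀ.mulVecLin := by
  rw [← LinearMap.ker_eq_bot]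
  have hr : Aᵀ.rank = m := by rw [Matrix.rank_transpose, hA]
  have h2 := Aᵀ.mulVecLin.finrank_range_add_finrank_ker
  rw [show Matrix.rank Aᵀ = Module.finrank ℝ (LinearMap.range Aᵀ.mulVecLin) from rfl] at hr
  rw [hr, Module.finrank_pi] at h2
  simp only [Fintype.card_fin] at h2
  have : Module.finrank ℝ (LinearMap.ker Aᵀ.mulVecLin) = 0 := by omega
  exact Submodule.finrank_eq_zero.mp this

/-- If `A` is `m×n` of full row rank `m ≤ n` and the block matrix `P` is symmetric
positive definite, then the KKT matrix `[[Pxx, Pxy, Aᵀ],[Pxyᵀ, Pyy, 0],[A, 0, 0]]`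
is nonsingular. -/
theorem stmt1 {m n p : ℕ} (hmn : m ≤ n)
    (A : Matrix (Fin m) (Fin n) ℝ) (hA : A.rank = m)
    (Pxx : Matrix (Fin n) (Fin n) ℝ) (Pyy : Matrix (Fin p) (Fin p) ℝ)
    (Pxy : Matrix (Fin n) (Fin p) ℝ)
    (hP : (Matrix.fromBlocks Pxx Pxy Pxyᵀ Pyy).PosDef) :
    (Matrix.fromBlocks
        (Matrix.fromBlocks Pxx Pxy Pxyᵀ Pyy)
        (Matrix.fromRows Aᵀ (0 : Matrix (Fin p) (Fin m) ℝ))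
        (Matrix.fromCols A (0 : Matrix (Fin m) (Fin p) ℝ))
        (0 : Matrix (Fin m) (Fin m) ℝ)).det ≠ 0 := by
  classical
  set Q := Matrix.fromBlocks Pxx Pxy Pxyᵀ Pyy with hQ
  set C := Matrix.fromCols A (0 : Matrix (Fin m) (Fin p) ℝ) with hC
  have hCt : Cᵀ = Matrix.fromRows Aᵀ (0 : Matrix (Fin p) (Fin m) ℝ) := by
    rw [hC, transpose_fromCols, transpose_zero]
  have hQdet : IsUnit Q.det := isUnit_iff_ne_zero.mpr hP.det_pos.ne'
  haveI : Invertible Q := Q.invertibleOfIsUnitDet hQdet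
  have hQinv : (Q⁻¹).PosDef := hP.inv
  -- the Schur complement C Q⁻¹ Cᵀ is positive definite
  have hSchur : (C * Q⁻¹ * Cᵀ).PosDef := by
    refine Matrix.PosDef.of_dotProduct_mulVec_pos ?_ ?_
    · have := hQinv.1
      unfold Matrix.IsHermitian at this ⊢
      rw [conjTranspose_mul, conjTranspose_mul, this]
      rw [show Cᵀᴴ = C from by ext i j; simp, show Cᴴ = Cᵀ from by ext i j; simp,
        Matrix.mul_assoc]
    · intro x hx
      have hy : Cᵀ *ᵥ x ≠ 0 := by
        intro h
        apply hx
        have h1 : Aᵀ *ᵥ x = 0 := by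
          funext i
          have := congrFun h (Sum.inl i)
          simpa [hCt, Matrix.fromRows_mulVec] using this
        have hinj := aux_inj A hA
        have : x = 0 := by
          have := hinj (a₁ := x) (a₂ := 0) (by simp only [mulVecLin_apply]; rw [h1, mulVec_zero])
          exact this
        exact this
      have := hQinv.dotProduct_mulVec_pos hy
      convert this using 1
      simp only [star_trivial, ← mulVec_mulVec]
      rw [dotProduct_mulVec x, ← mulVec_transpose]
  have hdet := Matrix.det_fromBlocks₁₁ Q Cᵀ C (0 : Matrix (Fin m) (Fin m) ℝ)
  rw [← hCt, hdet, invOf_eq_nonsing_inv, zero_sub, det_neg]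
  have h1 : Q.det ≠ 0 := hP.det_pos.ne'
  have h2 : (C * Q⁻¹ * Cᵀ).det ≠ 0 := hSchur.det_pos.ne'
  exact mul_ne_zero h1 (mul_ne_zero (pow_ne_zero _ (by norm_num)) h2)
end

section
/- Let 𝒥 be a strictly convex quadratic on ℝ^N and ℓ ∈ ℝ^N. The projected gradient path p(α) = max(x − α∇𝒥(x), ℓ) (componentwise, α ≥ 0) satisfies: if x ≥ ℓ and x is not a minimizer of 𝒥 over {z ≥ ℓ}, then there exists α > 0 with 𝒥(p(α)) < 𝒥(x). -/
open Matrix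

/-- Projected gradient path for a strictly convex quadratic
`𝒥(z) = gᵀz + ½ zᵀPz` over `{z ≥ ℓ}`: if `x ≥ ℓ` is not a global minimizer over
the feasible set, then some point `p(α) = max(x − α∇𝒥(x), ℓ)` with `α > 0` has a
strictly smaller objective value. -/
theorem stmt15 {N : ℕ} (g : Fin N → ℝ)
    (P : Matrix (Fin N) (Fin N) ℝ) (hP : P.PosDef)
    (ℓ x : Fin N → ℝ) (hx : ∀ i, ℓ i ≤ x i)
    (hnotmin : ¬ ∀ z : Fin N → ℝ, (∀ i, ℓ i ≤ z i) →
        g ⬝ᵥ x + (1/2) * (x ⬝ᵥ P.mulVec x)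
          ≤ g ⬝ᵥ z + (1/2) * (z ⬝ᵥ P.mulVec z)) :
    ∃ α : ℝ, 0 < α ∧
      (g ⬝ᵥ (fun i => max (x i - α * (g + P.mulVec x) i) (ℓ i))
          + (1/2) * ((fun i => max (x i - α * (g + P.mulVec x) i) (ℓ i))
              ⬝ᵥ P.mulVec (fun i => max (x i - α * (g + P.mulVec x) i) (ℓ i))))
        < g ⬝ᵥ x + (1/2) * (x ⬝ᵥ P.mulVec x) := by
  classical
  have hsym : ∀ u v : Fin N → ℝ, u ⬝ᵥ P.mulVec v = v ⬝ᵥ P.mulVec u := by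
    intro u v
    have hPsym : Pᵀ = P := by
      have := hP.isHermitian
      simpa [Matrix.IsHermitian] using this
    rw [Matrix.dotProduct_mulVec, ← Matrix.vecMul_transpose, hPsym, ← Matrix.mulVec_transpose,
      hPsym, dotProduct_comm]
  set J : (Fin N → ℝ) → ℝ := fun v => g ⬝ᵥ v + (1/2) * (v ⬝ᵥ P.mulVec v) with hJ
  set d : Fin N → ℝ := g + P.mulVec x with hd
  have hexp : ∀ v : Fin N → ℝ,
      J (x + v) = J x + d ⬝ᵥ v + (1/2) * (v ⬝ᵥ P.mulVec v) := by
    intro v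
    simp only [hJ, hd, Matrix.mulVec_add, dotProduct_add, add_dotProduct]
    rw [dotProduct_comm (P.mulVec x) v, hsym x v]
    ring
  set F : Fin N → Prop := fun i => ℓ i < x i ∨ d i ≤ 0 with hF
  set w : Fin N → ℝ := fun i => if F i then -d i else 0 with hw
  set c : ℝ := ∑ i, if F i then (d i) ^ 2 else 0 with hcdef
  have hterm_nonneg : ∀ i ∈ Finset.univ, (0:ℝ) ≤ if F i then (d i) ^ 2 else 0 := by
    intro i _
    by_cases h : F i <;> simp [h, sq_nonneg]
  have hc : 0 < c := by
    rcases lt_or_ge 0 c with h | h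
    · exact h
    · exfalso
      have hczero : c = 0 := le_antisymm h (Finset.sum_nonneg hterm_nonneg)
      have hall : ∀ i, F i → d i = 0 := by
        intro i hFi
        have := (Finset.sum_eq_zero_iff_of_nonneg hterm_nonneg).mp hczero i (Finset.mem_univ i)
        simpa [hFi, pow_eq_zero_iff] using this
      apply hnotmin
      intro z hz
      have h1 := hexp (z - x)
      rw [add_sub_cancel] at h1
      have h2 : 0 ≤ d ⬝ᵥ (z - x) := by
        apply Finset.sum_nonneg
        intro i _
        simp only [Pi.sub_apply]
        by_cases hFi : F i
        · simp [hall i hFi]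
        · have hxl : x i = ℓ i := le_antisymm (le_of_not_gt (fun h => hFi (Or.inl h))) (hx i)
          have hdi : 0 < d i := lt_of_not_ge (fun h => hFi (Or.inr h))
          have : 0 ≤ z i - x i := by rw [hxl]; linarith [hz i]
          positivity
      have h3 : 0 ≤ (z - x) ⬝ᵥ P.mulVec (z - x) := by
        have := hP.posSemidef.dotProduct_mulVec_nonneg (z - x)
        simpa using this
      show J x ≤ J z
      rw [h1]; linarith
  have hwF : ∀ i, F i → w i = -d i := fun i h => by simp [hw, h]
  have hwnF : ∀ i, ¬ F i → w i = 0 := fun i h => by simp [hw, h]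
  have hdw : d ⬝ᵥ w = -c := by
    rw [hcdef, ← Finset.sum_neg_distrib]
    apply Finset.sum_congr rfl
    intro i _
    by_cases h : F i <;> simp [hw, h] <;> ring
  have hwne : w ≠ 0 := by
    intro h0
    have : c = 0 := by
      rw [hcdef]
      apply Finset.sum_eq_zero
      intro i _
      by_cases h : F i
      · have hdi : d i = 0 := by
          have h1 := hwF i h
          have h2 : w i = 0 := by rw [h0]; rfl
          rw [h2] at h1; linarith
        simp [h, hdi]
      · simp [h]
    linarith
  set M : ℝ := w ⬝ᵥ P.mulVec w with hMdef
  have hM : 0 < M := by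
    have := hP.dotProduct_mulVec_pos hwne
    simpa [hMdef] using this
  -- step size bound from the constraints
  set f : Fin N → ℝ := fun i => if 0 < d i ∧ ℓ i < x i then (x i - ℓ i) / d i else 1 with hf
  have hfpos : ∀ i, 0 < f i := by
    intro i
    by_cases h : 0 < d i ∧ ℓ i < x i
    · simp only [hf, h, if_true]
      exact div_pos (by linarith [h.2]) h.1
    · simp [hf, h]
  set T : Finset ℝ := insert 1 (Finset.image f Finset.univ) with hT
  have hTne : T.Nonempty := ⟨1, by simp [hT]⟩
  set a : ℝ := T.min' hTne with ha
  have hapos : 0 < a := by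
    have := T.min'_mem hTne
    rw [← ha] at this
    rw [hT] at this
    rcases Finset.mem_insert.mp this with h | h
    · rw [h]; norm_num
    · rcases Finset.mem_image.mp h with ⟨i, _, hi⟩
      rw [← hi]; exact hfpos i
  have haf : ∀ i, a ≤ f i := by
    intro i
    apply Finset.min'_le
    rw [hT]
    exact Finset.mem_insert_of_mem (Finset.mem_image_of_mem f (Finset.mem_univ i))
  refine ⟨min a (c / M), lt_min hapos (div_pos hc hM), ?_⟩
  set α : ℝ := min a (c / M) with hα
  have hαpos : 0 < α := lt_min hapos (div_pos hc hM)
  have hαa : α ≤ a := min_le_left _ _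
  have hαcM : α * M ≤ c := (le_div_iff₀ hM).mp (min_le_right _ _)
  have hpt : (fun i => max (x i - α * d i) (ℓ i)) = x + α • w := by
    funext i
    simp only [Pi.add_apply, Pi.smul_apply, smul_eq_mul]
    by_cases hFi : F i
    · rw [hwF i hFi]
      have hle : ℓ i ≤ x i - α * d i := by
        rcases hFi with h | h
        · rcases le_or_gt (d i) 0 with hd0 | hd0
          · nlinarith
          · have h1 : α ≤ (x i - ℓ i) / d i := by
              have := haf i
              simp only [hf, h, hd0, and_true, if_true] at this
              linarith [hαa]
            have := (le_div_iff₀ hd0).mp h1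
            linarith
        · nlinarith [hx i]
      rw [max_eq_left hle]; ring
    · have hxl : x i = ℓ i := le_antisymm (le_of_not_gt (fun h => hFi (Or.inl h))) (hx i)
      have hdi : 0 < d i := lt_of_not_ge (fun h => hFi (Or.inr h))
      rw [hwnF i hFi]
      rw [max_eq_right (by nlinarith)]
      rw [hxl]; ring
  show J (fun i => max (x i - α * d i) (ℓ i)) < J x
  rw [hpt, hexp (α • w)]
  have e1 : d ⬝ᵥ (α • w) = α * (d ⬝ᵥ w) := by
    rw [dotProduct_smul]; simp
  have e2 : (α • w) ⬝ᵥ P.mulVec (α • w) = α ^ 2 * M := by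
    rw [smul_dotProduct, Matrix.mulVec_smul, dotProduct_smul, hMdef]
    simp; ring
  rw [e1, e2, hdw]
  nlinarith [hαpos, hc, hM, hαcM]
end
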